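/- A law L in a game (A, Δ, P) is gap-free if and only if at least one of the following is true: (1) L is a vertex cover of the hypergraph (⋃Δ, S(P)); (2) there is an agent a ∈ A and a safable action d ∈ Δ_a^L such that L is a vertex cover of the hypergraph H^{a,d}. -/

import Mathlib

namespace MAS

variable {A α : Type*}

/-- The set of profiles of an action family `Δ`: functions assigning to each
agent `a` an action in `Δ a`. -/
def Profiles (Δ : A → Set α) : Set (A → α) := {δ | ∀ a, δ a ∈ Δ a}

/-- The support set `S(δ)` of a profile `δ`. -/
def supp (δ : A → α) : Set α := Set.range δ

/-- A law in the game: a set of actions `L ⊆ ⋃ a, Δ a`. -/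
def IsLaw (Δ : A → Set α) (L : Set α) : Prop := L ⊆ ⋃ a, Δ a

/-- The law-imposed action sets `Δ_a^L = Δ_a \ L`. -/
def lawActions (Δ : A → Set α) (L : Set α) : A → Set α := fun a => Δ a \ L

/-- The law-imposed prohibition `P^L = P ∩ ∏ Δ^L`. -/
def lawProhib (Δ : A → Set α) (P : Set (A → α)) (L : Set α) : Set (A → α) :=
  P ∩ Profiles (lawActions Δ L)

/-- A law `L` is useful if `P^L = ∅` in the law-imposed game. -/
def Useful (Δ : A → Set α) (P : Set (A → α)) (L : Set α) : Prop :=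
  lawProhib Δ P L = ∅

/-- An action `d` is a safe action of agent `a` in the game `(A, Δ, P)` if
`d ∈ Δ a` and `δ a ≠ d` for every prohibited profile `δ ∈ P`. -/
def SafeAction (Δ : A → Set α) (P : Set (A → α)) (a : A) (d : α) : Prop :=
  d ∈ Δ a ∧ ∀ δ ∈ P, δ a ≠ d

/-- In a prohibited profile `δ ∈ P`, agent `a` is responsible under law `L` if
`δ a ∈ L` (legally), or `S(δ) ∩ L = ∅` and a safe action of agent `a` exists in
the law-imposed game (counterfactually). -/
def Responsible (Δ : A → Set α) (P : Set (A → α)) (L : Set α) (δ : A → α) (a : A) : Prop :=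
  δ a ∈ L ∨ (supp δ ∩ L = ∅ ∧ ∃ d, SafeAction (lawActions Δ L) (lawProhib Δ P L) a d)

/-- A law `L` is gap-free if in each prohibited profile there is at least one
responsible agent. -/
def GapFree (Δ : A → Set α) (P : Set (A → α)) (L : Set α) : Prop :=
  ∀ δ ∈ P, ∃ a, Responsible Δ P L δ a

/-- An action `d` is safable if there is a law `L` and an agent `a` such that
`d` is a safe action of agent `a` in the law-imposed game. -/
def Safable (Δ : A → Set α) (P : Set (A → α)) (d : α) : Prop :=
  ∃ L, IsLaw Δ L ∧ ∃ a, SafeAction (lawActions Δ L) (lawProhib Δ P L) a d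

/-- `C` is a vertex cover of the hypergraph `(V, E)`. -/
def IsVC (V : Set α) (E : Set (Set α)) (C : Set α) : Prop :=
  C ⊆ V ∧ ∀ e ∈ E, (C ∩ e).Nonempty

/-- A minimal vertex cover. -/
def MinimalVC (V : Set α) (E : Set (Set α)) (C : Set α) : Prop :=
  IsVC V E C ∧ ∀ C', C' ⊂ C → ¬ IsVC V E C'

/-- A minimal gap-free law: a gap-free law no strict subset of which is gap-free. -/
def MinimalGapFree (Δ : A → Set α) (P : Set (A → α)) (L : Set α) : Prop :=
  GapFree Δ P L ∧ ∀ L', L' ⊂ L → ¬ GapFree Δ P L'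

/-- `S(P) = {S(δ) : δ ∈ P}`. -/
def suppSet (P : Set (A → α)) : Set (Set α) := (fun δ => supp δ) '' P

/-- The edge set `E^C = {C ∩ e : e ∈ E}` of the induced subgraph. -/
def inducedEdges (E : Set (Set α)) (C : Set α) : Set (Set α) := (fun e => C ∩ e) '' E

/-- The vertex set `(⋃ Δ) \ {d}` of the hypergraph `H^{a,d}`. -/
def Hvertices (Δ : A → Set α) (d : α) : Set α := (⋃ a, Δ a) \ {d}

/-- The edge set `{S(δ) \ {d} : δ ∈ P, δ a = d}` of the hypergraph `H^{a,d}`. -/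
def Hedges (P : Set (A → α)) (a : A) (d : α) : Set (Set α) :=
  (fun δ => supp δ \ {d}) '' {δ ∈ P | δ a = d}

/-! If some prohibited profile avoids `L`, gap-freeness forces an agent `a` that is
counterfactually responsible there, i.e. has a safe action `d` under `L`; that same agent is
then responsible in every profile avoiding `L`. And `d` is safe for `a` under `L` exactly when
`L` meets every prohibited profile in which `a` plays `d`, i.e. covers `H^{a,d}`. -/

section

variable {Δ : A → Set α} {P : Set (A → α)} {L : Set α}

theorem inter_supp_nonempty_iff {δ : A → α} :
    (L ∩ supp δ).Nonempty ↔ ∃ b, δ b ∈ L := by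
  simp [supp, Set.Nonempty]

theorem inter_supp_diff_nonempty_iff {δ : A → α} {d : α} (hd : d ∉ L) :
    (L ∩ (supp δ \ {d})).Nonempty ↔ ∃ b, δ b ∈ L := by
  rw [← Set.inter_sdiff_assoc, Set.sdiff_singleton_eq_self (fun h => hd h.1)]
  exact inter_supp_nonempty_iff

theorem isVC_suppSet_iff (hL : IsLaw Δ L) :
    IsVC (⋃ a, Δ a) (suppSet P) L ↔ ∀ δ ∈ P, ∃ b, δ b ∈ L := by
  simp only [IsVC, suppSet, Set.forall_mem_image, inter_supp_nonempty_iff]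
  exact and_iff_right hL

theorem isVC_hypergraph_iff {a : A} {d : α} (hL : IsLaw Δ L) (hd : d ∉ L) :
    IsVC (Hvertices Δ d) (Hedges P a d) L ↔ ∀ δ ∈ P, δ a = d → ∃ b, δ b ∈ L := by
  have hLV : L ⊆ Hvertices Δ d := fun x hx => ⟨hL hx, fun hxd => hd (hxd ▸ hx)⟩
  simp only [IsVC, Hedges, Set.forall_mem_image, Set.mem_ofPred_eq, and_imp,
    inter_supp_diff_nonempty_iff hd]
  exact and_iff_right hLV

theorem mem_lawProhib_iff {δ : A → α} (hP : P ⊆ Profiles Δ) (hδ : δ ∈ P) :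
    δ ∈ lawProhib Δ P L ↔ ∀ b, δ b ∉ L :=
  ⟨fun h b => (h.2 b).2, fun h => ⟨hδ, fun b => ⟨hP hδ b, h b⟩⟩⟩

theorem safeAction_lawImposed_iff {a : A} {d : α} (hP : P ⊆ Profiles Δ) :
    SafeAction (lawActions Δ L) (lawProhib Δ P L) a d ↔
      d ∈ lawActions Δ L a ∧ ∀ δ ∈ P, δ a = d → ∃ b, δ b ∈ L := by
  refine and_congr_right fun _ => ⟨fun hsafe δ hδ hδa => ?_, fun hcov δ hδ hδa => ?_⟩
  · exact not_forall_not.mp fun hfree => hsafe δ ((mem_lawProhib_iff hP hδ).2 hfree) hδa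
  · obtain ⟨b, hb⟩ := hcov δ hδ.1 hδa
    exact (hδ.2 b).2 hb

theorem gapFree_iff_covers_or_exists_safeAction :
    GapFree Δ P L ↔
      (∀ δ ∈ P, ∃ b, δ b ∈ L) ∨ ∃ a d, SafeAction (lawActions Δ L) (lawProhib Δ P L) a d := by
  constructor
  · intro hgf
    by_cases hcov : ∀ δ ∈ P, ∃ b, δ b ∈ L
    · exact .inl hcov
    push Not at hcov
    obtain ⟨δ, hδ, hfree⟩ := hcov
    obtain ⟨a, hlegal | ⟨-, d, hsafe⟩⟩ := hgf δ hδ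
    · exact absurd hlegal (hfree a)
    · exact .inr ⟨a, d, hsafe⟩
  · rintro (hcov | ⟨a, d, hsafe⟩) δ hδ
    · obtain ⟨b, hb⟩ := hcov δ hδ
      exact ⟨b, .inl hb⟩
    by_cases hlegal : ∃ b, δ b ∈ L
    · obtain ⟨b, hb⟩ := hlegal
      exact ⟨b, .inl hb⟩
    have hdisj : supp δ ∩ L = ∅ := by
      rw [Set.inter_comm, ← Set.not_nonempty_iff_eq_empty, inter_supp_nonempty_iff]
      exact hlegal
    exact ⟨a, .inr ⟨hdisj, d, hsafe⟩⟩

end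

theorem gapFree_iff_isVC_general {A α : Type*}
    (Δ : A → Set α) (P : Set (A → α))
    (hP : P ⊆ Profiles Δ)
    (L : Set α) (hL : IsLaw Δ L) :
    GapFree Δ P L ↔
      (IsVC (⋃ a, Δ a) (suppSet P) L ∨
        ∃ a, ∃ d ∈ lawActions Δ L a, Safable Δ P d ∧
          IsVC (Hvertices Δ d) (Hedges P a d) L) := by
  rw [gapFree_iff_covers_or_exists_safeAction, isVC_suppSet_iff hL]
  refine or_congr_right ⟨?_, ?_⟩
  · rintro ⟨a, d, hsafe⟩
    obtain ⟨hd, hcov⟩ := (safeAction_lawImposed_iff hP).1 hsafe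
    exact ⟨a, d, hd, ⟨L, hL, a, hsafe⟩, (isVC_hypergraph_iff hL hd.2).2 hcov⟩
  · rintro ⟨a, d, hd, -, hVC⟩
    exact ⟨a, d, (safeAction_lawImposed_iff hP).2 ⟨hd, (isVC_hypergraph_iff hL hd.2).1 hVC⟩⟩

/-- A law `L` in a game `(A, Δ, P)` is gap-free if and only if
(1) `L` is a vertex cover of the hypergraph `(⋃Δ, S(P))`, or (2) there is an
agent `a ∈ A` and a safable action `d ∈ Δ_a^L` such that `L` is a vertex cover
of the hypergraph `H^{a,d}`. -/
theorem gapFree_iff_isVC {A α : Type*} [Fintype A] [Nonempty A]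
    (Δ : A → Set α) (P : Set (A → α))
    (hΔfin : ∀ a, (Δ a).Finite) (hP : P ⊆ Profiles Δ)
    (L : Set α) (hL : IsLaw Δ L) :
    GapFree Δ P L ↔
      (IsVC (⋃ a, Δ a) (suppSet P) L ∨
        ∃ a, ∃ d ∈ lawActions Δ L a, Safable Δ P d ∧
          IsVC (Hvertices Δ d) (Hedges P a d) L) :=
  gapFree_iff_isVC_general Δ P hP L hL

end MAS
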